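/- Let A = [[−1, −2], [−1, −1]], K = {x ∈ ℝ² : 4x₁ − x₂ ≥ 0 and 4x₂ − x₁ ≥ 0}, and V(x) = 2.9·x₁² + x₁x₂ + x₂². Consider a nonzero boundary point x of K lying on a face of K: either (a) x = t·(1, 1/4) with t > 0 (face where 4x₂ − x₁ = 0... i.e. the face {−x₁/4 + x₂ = 0}), or (b) x = t·(1/4, 1) with t > 0 (face {x₁ − x₂/4 = 0}). Let n be the outward unit-direction normal to K at x (n proportional to (1/4, −1) in case (a) and to (−1, 1/4) in case (b)), and let η_x = −(⟨Ax, n⟩/‖n‖²)·n be the negative of the Euclidean projection of Ax onto the normal ray (so that Ax + η_x is tangent to the face, i.e., ⟨Ax + η_x, n⟩ = 0). Then in both cases ⟨Ax, n⟩ > 0 and ⟨∇V(x), Ax + η_x⟩ < 0. -/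

import Mathlib

/-!
On each face the projected field at the generator `v` is `Av + η_v = -(29/17) v`, and both the
field and the correction are homogeneous, so at `x = t v` the projected field is `-(29/17) x`:
it slides along the face towards the origin. Since `V` is a positive definite quadratic form,
`⟨∇V(x), x⟩ = 2 V(x) > 0`, hence `V` decreases at rate `(58/17) V(x)`. Outwardness is
`⟨Ax, n⟩ = t ⟨Av, n⟩ > 0`.
-/

open RealInnerProductSpace

noncomputable section

/-- `A = [[−1, −2], [−1, −1]]`. -/
def Amat : Matrix (Fin 2) (Fin 2) ℝ := !![-1, -2; -1, -1]

/-- The linear vector field `x ↦ Ax` on Euclidean `ℝ²`. -/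
def Amap (x : EuclideanSpace ℝ (Fin 2)) : EuclideanSpace ℝ (Fin 2) :=
  Matrix.toEuclideanLin Amat x

/-- `V(x) = 2.9 x₁² + x₁x₂ + x₂²`. -/
def Vquad (x : EuclideanSpace ℝ (Fin 2)) : ℝ :=
  2.9 * (x 0) ^ 2 + x 0 * x 1 + (x 1) ^ 2

/-- Generator `(1, 1/4)` of the face `{4x₂ − x₁ = 0}` of `K`. -/
def va : EuclideanSpace ℝ (Fin 2) := (EuclideanSpace.equiv (Fin 2) ℝ).symm ![1, 1/4]

/-- Outward normal direction `(1/4, −1)` to `K` on the face `{4x₂ − x₁ = 0}`. -/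
def na : EuclideanSpace ℝ (Fin 2) := (EuclideanSpace.equiv (Fin 2) ℝ).symm ![1/4, -1]

/-- Generator `(1/4, 1)` of the face `{4x₁ − x₂ = 0}` of `K`. -/
def vb : EuclideanSpace ℝ (Fin 2) := (EuclideanSpace.equiv (Fin 2) ℝ).symm ![1/4, 1]

/-- Outward normal direction `(−1, 1/4)` to `K` on the face `{4x₁ − x₂ = 0}`. -/
def nb : EuclideanSpace ℝ (Fin 2) := (EuclideanSpace.equiv (Fin 2) ℝ).symm ![-1, 1/4]

/-- The projected-dynamics correction term `η_x = −(⟨Ax, n⟩/‖n‖²) n`, the negative of the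
Euclidean projection of `Ax` onto the normal ray spanned by `n`. -/
def eta (x n : EuclideanSpace ℝ (Fin 2)) : EuclideanSpace ℝ (Fin 2) :=
  -((⟪Amap x, n⟫ / ‖n‖ ^ 2) • n)

theorem EuclideanSpace.inner_fin_two (x y : EuclideanSpace ℝ (Fin 2)) :
    ⟪x, y⟫ = x 0 * y 0 + x 1 * y 1 := by
  simp [PiLp.inner_apply, Fin.sum_univ_two, mul_comm]

theorem Matrix.toEuclideanLin_fin_two_apply (a b c d : ℝ) (x : EuclideanSpace ℝ (Fin 2)) :
    Matrix.toEuclideanLin !![a, b; c, d] x = !₂[a * x 0 + b * x 1, c * x 0 + d * x 1] := by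
  ext i
  fin_cases i <;> simp [Matrix.vecHead, Matrix.vecTail]

theorem inner_Amap_add_eta_self (x n : EuclideanSpace ℝ (Fin 2)) :
    ⟪Amap x + eta x n, n⟫ = 0 := by
  rcases eq_or_ne n 0 with rfl | hn
  · simp
  · have hn2 : ‖n‖ ^ 2 ≠ 0 := by positivity
    rw [eta, inner_add_left, inner_neg_left, real_inner_smul_left, real_inner_self_eq_norm_sq,
      div_mul_cancel₀ _ hn2, add_neg_cancel]

theorem Amap_smul (t : ℝ) (x : EuclideanSpace ℝ (Fin 2)) : Amap (t • x) = t • Amap x :=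
  map_smul _ t x

theorem Amap_add_eta_smul (t : ℝ) (x n : EuclideanSpace ℝ (Fin 2)) :
    Amap (t • x) + eta (t • x) n = t • (Amap x + eta x n) := by
  simp only [eta, Amap_smul, real_inner_smul_left, smul_add, smul_neg, smul_smul, mul_div_assoc]

theorem hasGradientAt_Vquad (x : EuclideanSpace ℝ (Fin 2)) :
    HasGradientAt Vquad (Matrix.toEuclideanLin !![29/5, 1; 1, 2] x) x := by
  have h0 := (EuclideanSpace.proj (0 : Fin 2) : EuclideanSpace ℝ (Fin 2) →L[ℝ] ℝ).hasFDerivAt (x := x)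
  have h1 := (EuclideanSpace.proj (1 : Fin 2) : EuclideanSpace ℝ (Fin 2) →L[ℝ] ℝ).hasFDerivAt (x := x)
  have hV : Vquad = fun y => 2.9 * (y 0 * y 0) + y 0 * y 1 + y 1 * y 1 := by
    funext y
    rw [Vquad]
    ring
  rw [hasGradientAt_iff_hasFDerivAt, hV]
  refine ((((h0.mul h0).const_mul 2.9).add (h0.mul h1)).add (h1.mul h1)).congr_fderiv ?_
  ext y
  simp only [PiLp.proj_apply, smul_add, add_apply, smul_apply, smul_eq_mul,
    Matrix.toEuclideanLin_fin_two_apply, one_mul, InnerProductSpace.toDual_apply_apply,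
    EuclideanSpace.inner_fin_two, Matrix.cons_val_zero, Matrix.cons_val_one, Matrix.cons_val_fin_one]
  ring

theorem inner_gradient_Vquad_self (x : EuclideanSpace ℝ (Fin 2)) :
    ⟪gradient Vquad x, x⟫ = 2 * Vquad x := by
  rw [(hasGradientAt_Vquad x).gradient, Matrix.toEuclideanLin_fin_two_apply,
    EuclideanSpace.inner_fin_two, Vquad]
  simp only [Matrix.cons_val_zero, Matrix.cons_val_one, Matrix.cons_val_fin_one]
  ring

theorem Vquad_pos {x : EuclideanSpace ℝ (Fin 2)} (hx : x ≠ 0) : 0 < Vquad x := by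
  have hx' : x 0 ≠ 0 ∨ x 1 ≠ 0 := by
    by_contra! h
    exact hx (by ext i; fin_cases i <;> simp [h.1, h.2])
  rw [Vquad]
  rcases hx' with h | h
  · nlinarith [sq_pos_of_ne_zero h, sq_nonneg (x 1 + x 0 / 2)]
  · nlinarith [sq_pos_of_ne_zero h, sq_nonneg (x 0 + x 1 / 5.8)]

theorem face_projected_field_decrease {v n : EuclideanSpace ℝ (Fin 2)} {c : ℝ} (hv : v ≠ 0)
    (hAn : 0 < ⟪Amap v, n⟫) (hproj : Amap v + eta v n = c • v) (hc : c < 0) {t : ℝ} (ht : 0 < t) :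
    0 < ⟪Amap (t • v), n⟫ ∧ ⟪Amap (t • v) + eta (t • v) n, n⟫ = 0 ∧
      ⟪gradient Vquad (t • v), Amap (t • v) + eta (t • v) n⟫ < 0 := by
  refine ⟨?_, inner_Amap_add_eta_self _ _, ?_⟩
  · rw [Amap_smul, real_inner_smul_left]
    exact mul_pos ht hAn
  · have hV := Vquad_pos (smul_ne_zero ht.ne' hv)
    rw [Amap_add_eta_smul, hproj, smul_comm, real_inner_smul_right, inner_gradient_Vquad_self]
    exact mul_neg_of_neg_of_pos hc (mul_pos two_pos hV)

theorem va_ne_zero : va ≠ 0 := fun h => by simpa [va] using congrArg (· 0) h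

theorem vb_ne_zero : vb ≠ 0 := fun h => by simpa [vb] using congrArg (· 1) h

theorem inner_Amap_va_na : ⟪Amap va, na⟫ = 7 / 8 := by
  norm_num [Amap, Amat, va, na, EuclideanSpace.inner_fin_two]

theorem inner_Amap_vb_nb : ⟪Amap vb, nb⟫ = 31 / 16 := by
  norm_num [Amap, Amat, vb, nb, EuclideanSpace.inner_fin_two]

theorem Amap_va_add_eta : Amap va + eta va na = (-29 / 17 : ℝ) • va := by
  rw [eta, inner_Amap_va_na, EuclideanSpace.real_norm_sq_eq]
  ext i
  fin_cases i <;> norm_num [Amap, Amat, va, na, Fin.sum_univ_two]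

theorem Amap_vb_add_eta : Amap vb + eta vb nb = (-29 / 17 : ℝ) • vb := by
  rw [eta, inner_Amap_vb_nb, EuclideanSpace.real_norm_sq_eq]
  ext i
  fin_cases i <;> norm_num [Amap, Amat, vb, nb, Fin.sum_univ_two]

/-- at every nonzero point `x` of either face of the cone
`K = {x : 4x₁ − x₂ ≥ 0, 4x₂ − x₁ ≥ 0}`, the vector field `Ax` points outward
(`⟨Ax, n⟩ > 0`), the corrected vector `Ax + η_x` is tangent to the face
(`⟨Ax + η_x, n⟩ = 0`), and `V` strictly decreases along the projected dynamics:
`⟨∇V(x), Ax + η_x⟩ < 0`. -/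
theorem example_boundary_projection_decrease :
    ∀ t : ℝ, 0 < t →
      (0 < ⟪Amap (t • va), na⟫ ∧
        ⟪Amap (t • va) + eta (t • va) na, na⟫ = 0 ∧
        ⟪gradient Vquad (t • va), Amap (t • va) + eta (t • va) na⟫ < 0) ∧
      (0 < ⟪Amap (t • vb), nb⟫ ∧
        ⟪Amap (t • vb) + eta (t • vb) nb, nb⟫ = 0 ∧
        ⟪gradient Vquad (t • vb), Amap (t • vb) + eta (t • vb) nb⟫ < 0) := fun _ ht =>
  ⟨face_projected_field_decrease va_ne_zero (by rw [inner_Amap_va_na]; norm_num) Amap_va_add_eta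
      (by norm_num) ht,
    face_projected_field_decrease vb_ne_zero (by rw [inner_Amap_vb_nb]; norm_num) Amap_vb_add_eta
      (by norm_num) ht⟩

end
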